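/- Let M be a nonnegative integer, let σ_{j,i} (for H_{j,i} ≠ 0) be permutations of {1,…,M} specifying an M-cover of the Tanner graph of H, and let p be a graph-cover pseudocodeword for this M-cover. Then there exists an LP pseudocodeword (h, z) whose matrix representation equals that of p, i.e., h_i(α) = m_i(α) = |{ℓ ∈ {1,…,M} : p_{i,ℓ} = α}| for all i ∈ {1,…,n} and α ∈ R. -/

import Mathlib

open Finset

/-- The tuple of sets `X_j(c)`: for each symbol `α`, the set of positions `i` in the
support of the `j`-th row of `H` where `c i = α`. -/
def Xj {R : Type} [Ring R] [DecidableEq R] {n m : ℕ} (H : Fin m → Fin n → R) (j : Fin m)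
    (c : Fin n → R) : R → Finset (Fin n) :=
  fun α => univ.filter (fun i => H j i ≠ 0 ∧ c i = α)

/-- The set `E_j` of all tuples `X_j(c)` arising from words `c` satisfying parity check `j`. -/
def Ej {R : Type} [Ring R] [Fintype R] [DecidableEq R] {n m : ℕ} (H : Fin m → Fin n → R)
    (j : Fin m) : Finset (R → Finset (Fin n)) :=
  (univ.filter (fun c : Fin n → R => ∑ i, H j i * c i = 0)).image (Xj H j)

/-- Membership in the relaxed LP polytope `Q`. -/
def MemQ {R : Type} [Ring R] [Fintype R] [DecidableEq R] {n m : ℕ} (H : Fin m → Fin n → R)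
    (f : Fin n → R → ℝ) (w : Fin m → (R → Finset (Fin n)) → ℝ) : Prop :=
  (∀ j : Fin m, ∀ S ∈ Ej H j, 0 ≤ w j S ∧ w j S ≤ 1) ∧
  (∀ j : Fin m, ∑ S ∈ Ej H j, w j S = 1) ∧
  (∀ j : Fin m, ∀ i : Fin n, H j i ≠ 0 → ∀ α : R, α ≠ 0 →
    f i α = ∑ S ∈ (Ej H j).filter (fun S => i ∈ S α), w j S)

/-- LP pseudocodeword: nonnegative integer vectors `(h, z)` satisfying the defining equations. -/
def IsLPPseudocodeword {R : Type} [Ring R] [Fintype R] [DecidableEq R] {n m : ℕ}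
    (H : Fin m → Fin n → R) (h : Fin n → R → ℤ)
    (z : Fin m → (R → Finset (Fin n)) → ℤ) : Prop :=
  (∀ i α, 0 ≤ h i α) ∧
  (∀ j : Fin m, ∀ S ∈ Ej H j, 0 ≤ z j S) ∧
  (∀ j : Fin m, ∀ i : Fin n, H j i ≠ 0 →
    (∀ α : R, α ≠ 0 → h i α = ∑ S ∈ (Ej H j).filter (fun S => i ∈ S α), z j S) ∧
    h i 0 = ∑ S ∈ (Ej H j).filter (fun S => ∀ α : R, α ≠ 0 → i ∉ S α), z j S)

/-- The embedding of a word `c ∈ Rⁿ` as the point `(ξ(c₁) | … | ξ(c_n))`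
(indicator coordinates for the nonzero symbols). -/
def xiEmb {R : Type} [Zero R] [DecidableEq R] {n : ℕ} (c : Fin n → R) : Fin n → R → ℝ :=
  fun i α => if α ≠ 0 ∧ c i = α then 1 else 0

/-- The linear cost function `λ · fᵀ = ∑_i ∑_{α ∈ R⁻} λ_i^{(α)} f_i^{(α)}`. -/
def costQ {R : Type} [Zero R] [Fintype R] [DecidableEq R] {n : ℕ}
    (lam f : Fin n → R → ℝ) : ℝ :=
  ∑ i, ∑ α ∈ univ.filter (fun α : R => α ≠ 0), lam i α * f i α

/-- Connectedness of the Tanner graph of `H`: the bipartite graph on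
`{u_1,…,u_n} ∪ {v_1,…,v_m}` with `u_i ~ v_j` iff `H j i ≠ 0`. -/
def TannerConnected {R : Type} [Zero R] {n m : ℕ} (H : Fin m → Fin n → R) : Prop :=
  (SimpleGraph.fromRel (fun x y : Fin n ⊕ Fin m =>
      ∃ i j, x = Sum.inl i ∧ y = Sum.inr j ∧ H j i ≠ 0)).Connected

/-- Graph-cover pseudocodeword for the `M`-cover specified by permutations `σ`. -/
def IsGCPseudocodeword {R : Type} [Ring R] [DecidableEq R] {n m : ℕ}
    (H : Fin m → Fin n → R) (M : ℕ) (σ : Fin m → Fin n → Equiv.Perm (Fin M))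
    (p : Fin n → Fin M → R) : Prop :=
  ∀ (j : Fin m) (ℓ : Fin M),
    ∑ i ∈ univ.filter (fun i => H j i ≠ 0), H j i * p i (σ j i ℓ) = 0

/-!
Copy `ℓ` of check node `j` reads the word `i ↦ p i (σ j i ℓ)`, which satisfies check `j`; take
`z j S` to be the number of copies whose configuration `X_j` is `S`. Since each `σ j i` is a
bijection, the copies of check `j` carry the values of variable `i` with the same multiplicities
as `p i`, so counting copies by configuration gives the LP equations.
-/

def coverLocalWord {R : Type} {n m M : ℕ} (σ : Fin m → Fin n → Equiv.Perm (Fin M))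
    (p : Fin n → Fin M → R) (j : Fin m) (ℓ : Fin M) : Fin n → R :=
  fun i => p i (σ j i ℓ)

theorem card_filter_perm_comp_eq {ι β : Type*} [Fintype ι] [DecidableEq β] (e : Equiv.Perm ι)
    (f : ι → β) (b : β) : #{ℓ | f (e ℓ) = b} = #{ℓ | f ℓ = b} :=
  card_equiv e (by simp)

theorem card_filter_comp_eq_sum_card_fiber {ι T : Type*} [Fintype ι] [DecidableEq T]
    (f : ι → T) {E : Finset T} (hf : ∀ ℓ, f ℓ ∈ E) (P : T → Prop) [DecidablePred P] :
    #{ℓ | P (f ℓ)} = ∑ S ∈ E.filter P, #{ℓ | f ℓ = S} := by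
  rw [card_eq_sum_card_fiberwise fun ℓ hℓ => mem_filter.2 ⟨hf ℓ, (mem_filter.1 hℓ).2⟩]
  refine sum_congr rfl fun S hS => ?_
  rw [filter_filter]
  congr 1
  exact filter_congr fun ℓ _ => ⟨And.right, fun hℓ => ⟨hℓ ▸ (mem_filter.1 hS).2, hℓ⟩⟩

section LocalCode

variable {R : Type} [Ring R] [DecidableEq R] {n m : ℕ} {H : Fin m → Fin n → R} {j : Fin m}
  {i : Fin n}

theorem mem_Xj_iff (hi : H j i ≠ 0) {c : Fin n → R} {α : R} : i ∈ Xj H j c α ↔ c i = α := by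
  simp [Xj, hi]

theorem forall_not_mem_Xj_iff (hi : H j i ≠ 0) {c : Fin n → R} :
    (∀ α : R, α ≠ 0 → i ∉ Xj H j c α) ↔ c i = 0 := by
  simp only [mem_Xj_iff hi]
  exact ⟨fun h => by_contra fun h0 => h _ h0 rfl, fun h0 α hα hc => hα (hc ▸ h0)⟩

theorem Xj_mem_Ej [Fintype R] {c : Fin n → R}
    (hc : ∑ i ∈ univ.filter (fun i => H j i ≠ 0), H j i * c i = 0) : Xj H j c ∈ Ej H j := by
  refine mem_image.2 ⟨c, mem_filter.2 ⟨mem_univ _, ?_⟩, rfl⟩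
  rwa [sum_filter_of_ne (p := fun i => H j i ≠ 0)
    fun i _ hne h0 => hne (by rw [h0, zero_mul])] at hc

end LocalCode

/-- from a graph-cover pseudocodeword `p` of an `M`-cover one obtains an
LP pseudocodeword `(h, z)` with the same matrix representation. -/
theorem stmt7 {R : Type} [Ring R] [Fintype R] [DecidableEq R] {n m : ℕ}
    (H : Fin m → Fin n → R) (M : ℕ)
    (σ : Fin m → Fin n → Equiv.Perm (Fin M)) (p : Fin n → Fin M → R)
    (hp : IsGCPseudocodeword H M σ p) :
    ∃ (h : Fin n → R → ℤ) (z : Fin m → (R → Finset (Fin n)) → ℤ),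
      IsLPPseudocodeword H h z ∧
      ∀ (i : Fin n) (α : R),
        h i α = ((univ.filter (fun ℓ : Fin M => p i ℓ = α)).card : ℤ) := by
  set w := coverLocalWord σ p
  have hw : ∀ j ℓ, Xj H j (w j ℓ) ∈ Ej H j := fun j ℓ => Xj_mem_Ej (hp j ℓ)
  refine ⟨fun i α => #{ℓ | p i ℓ = α}, fun j S => #{ℓ | Xj H j (w j ℓ) = S},
    ⟨fun _ _ => Int.natCast_nonneg _, fun _ _ _ => Int.natCast_nonneg _, ?_⟩, fun _ _ => rfl⟩
  intro j i hi
  have hcount : ∀ (P : (R → Finset (Fin n)) → Prop) [DecidablePred P] (α : R),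
      (∀ ℓ, P (Xj H j (w j ℓ)) ↔ w j ℓ i = α) →
      (#{ℓ | p i ℓ = α} : ℤ) = ∑ S ∈ (Ej H j).filter P, (#{ℓ | Xj H j (w j ℓ) = S} : ℤ) := by
    intro P _ α hP
    rw [← card_filter_perm_comp_eq (σ j i)]
    change (#{ℓ | w j ℓ i = α} : ℤ) = _
    rw [← filter_congr fun ℓ _ => hP ℓ, card_filter_comp_eq_sum_card_fiber _ (hw j) P]
    push_cast
    rfl
  exact ⟨fun α _ => hcount _ α fun _ => mem_Xj_iff hi,
    hcount _ 0 fun _ => forall_not_mem_Xj_iff hi⟩
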